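/- A graph G = (V,E) with |E| = 2|V| - 2 is bispanning (its edge set decomposes into two disjoint spanning trees) if and only if for every partition P of V, the number of edges with ends in different parts is at least 2(|P| - 1). -/

import Mathlib

/-
Necessity: a spanning tree still connects the quotient of `V` by a partition `P`, so each of the
two trees has at least `|P| - 1` edges between different parts.

Sufficiency: the partition with one block `U` and singletons elsewhere shows that `G` is
`(2,2)`-sparse, i.e. every `U` spans at most `2|U| - 2` edges. A sparse graph with `2|V| - 2` edges
has a vertex `v` of degree `2` or `3`. If it has degree `2`, delete it. If it has degree `3`, with
neighbours `a₁, a₂, a₃`, delete it and join two of its neighbours by a new edge; this keeps the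
graph sparse unless the pair lies in a tight set (one spanning exactly `2|U| - 2` edges) avoiding
`v`. Two tight sets sharing a vertex have a tight union, and a tight set cannot contain all three
neighbours, so `a₁a₂` or `a₁a₃` is a safe choice. By induction the smaller graph is bispanning,
and its two trees extend to `G`: the tree through the new edge reroutes it through `v`.
-/

namespace MG

variable {V E : Type*}

/-- Two vertices are joined by an edge of `F`. -/
def Adj (ends : E → Sym2 V) (F : Set E) (u v : V) : Prop :=
  ∃ e ∈ F, ends e = s(u, v)

/-- Reachability using edges of `F`. -/
def Reach (ends : E → Sym2 V) (F : Set E) : V → V → Prop :=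
  Relation.ReflTransGen (Adj ends F)

/-- The edge set `F` connects all vertices of the multigraph. -/
def Conn (ends : E → Sym2 V) (F : Set E) : Prop :=
  ∀ u v : V, Reach ends F u v

/-- `F` is a spanning tree: it connects all vertices using exactly `|V| - 1` edges. -/
def IsSpanningTree (ends : E → Sym2 V) (F : Set E) : Prop :=
  Conn ends F ∧ Nat.card F = Nat.card V - 1

/-- The multigraph is bispanning: its edge set is the disjoint union of two spanning trees. -/
def Bispanning (ends : E → Sym2 V) : Prop :=
  ∃ S T : Set E, S ∪ T = Set.univ ∧ Disjoint S T ∧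
    IsSpanningTree ends S ∧ IsSpanningTree ends T

/-- Degree of a vertex: number of incident edges. -/
noncomputable def deg (ends : E → Sym2 V) (v : V) : ℕ :=
  Nat.card {e : E | v ∈ ends e}

/-- `C` is (the edge set of) a simple cycle: nonempty, connected, and every
incident vertex is incident to exactly two edges of `C`. -/
def IsCycle (ends : E → Sym2 V) (C : Set E) : Prop :=
  C.Nonempty ∧
  (∀ u v : V, (∃ e ∈ C, u ∈ ends e) → (∃ e ∈ C, v ∈ ends e) → Reach ends C u v) ∧
  (∀ v : V, (∃ e ∈ C, v ∈ ends e) → Nat.card {e : E | e ∈ C ∧ v ∈ ends e} = 2)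

/-- Number of connected components when only edges of `F` are used. -/
noncomputable def numComp (ends : E → Sym2 V) (F : Set E) : ℕ :=
  Nat.card (Quot (Reach ends F))

/-- `D` is an edge cut: removing it increases the number of components. -/
def IsEdgeCut (ends : E → Sym2 V) (D : Set E) : Prop :=
  numComp ends Set.univ < numComp ends Dᶜ

/-- A minimal edge cut: no proper subset is an edge cut. -/
def IsMinEdgeCut (ends : E → Sym2 V) (D : Set E) : Prop :=
  IsEdgeCut ends D ∧ ∀ D' : Set E, D' ⊂ D → ¬ IsEdgeCut ends D'

/-- `D` is the fundamental cut of the tree edge `e` of the spanning tree `F`: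
the minimal edge cut contained in `(E \ F) + e`, which contains `e`. -/
def IsFundCut (ends : E → Sym2 V) (F : Set E) (e : E) (D : Set E) : Prop :=
  D ⊆ insert e Fᶜ ∧ e ∈ D ∧ IsMinEdgeCut ends D

/-- `C` is the fundamental cycle of the non-tree edge `e` w.r.t. the spanning tree `F`:
the cycle contained in `F + e`, which contains `e`. -/
def IsFundCycle (ends : E → Sym2 V) (F : Set E) (e : E) (C : Set E) : Prop :=
  C ⊆ insert e F ∧ e ∈ C ∧ IsCycle ends C

end MG

namespace MG

variable {V W E : Type*} {ends : E → Sym2 V} {F F' : Set E} {U U' : Set V} {e : E} {u v w : V}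

lemma Adj.symm (h : Adj ends F u v) : Adj ends F v u := by
  obtain ⟨e, he, hab⟩ := h
  exact ⟨e, he, hab.trans Sym2.eq_swap⟩

instance : Std.Symm (Adj ends F) := ⟨fun _ _ => Adj.symm⟩

lemma Adj.reach (h : Adj ends F u v) : Reach ends F u v := .single h

lemma Reach.symm (h : Reach ends F u v) : Reach ends F v u :=
  symm_of (Relation.ReflTransGen (Adj ends F)) h

lemma Reach.trans (h : Reach ends F u v) (h' : Reach ends F v w) : Reach ends F u w :=
  Relation.ReflTransGen.trans h h'

lemma Reach.mono (hF : F ⊆ F') (h : Reach ends F u v) : Reach ends F' u v :=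
  Relation.ReflTransGen.mono (fun _ _ ⟨e, he, hab⟩ => ⟨e, hF he, hab⟩) _ _ h

lemma Conn.map_of_surjective {f : V → W} (hf : f.Surjective) (h : Conn ends F) :
    Conn (fun e => (ends e).map f) F := by
  intro p q
  obtain ⟨u, rfl⟩ := hf p
  obtain ⟨v, rfl⟩ := hf q
  refine Relation.ReflTransGen.lift f (fun a b ⟨e, he, hab⟩ => ⟨e, he, ?_⟩) _ _ (h u v)
  simp [hab]

lemma Conn.card_le_ncard_add_one [Finite E] (h : Conn ends F) :
    Nat.card V ≤ {e ∈ F | ¬ (ends e).IsDiag}.ncard + 1 := by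
  rcases isEmpty_or_nonempty V with _ | _
  · simp
  let G := SimpleGraph.fromEdgeSet (ends '' F)
  have hG : G.Connected := by
    refine ⟨fun u v => (SimpleGraph.reachable_iff_reflTransGen u v).2 ?_⟩
    refine Relation.reflTransGen_closed (fun a b ⟨e, he, hab⟩ => ?_) _ _ (h u v)
    by_cases hne : a = b
    · exact hne ▸ .refl
    · exact .single ((SimpleGraph.fromEdgeSet_adj _).2 ⟨⟨e, he, hab⟩, hne⟩)
  have hsub : G.edgeSet ⊆ ends '' {e ∈ F | ¬ (ends e).IsDiag} := by
    rw [SimpleGraph.edgeSet_fromEdgeSet]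
    rintro _ ⟨⟨e, he, rfl⟩, hd⟩
    exact ⟨e, ⟨he, hd⟩, rfl⟩
  calc Nat.card V ≤ Nat.card G.edgeSet + 1 := hG.card_vert_le_card_edgeSet_add_one
    _ ≤ {e ∈ F | ¬ (ends e).IsDiag}.ncard + 1 := by
      rw [Nat.card_coe_set_eq]
      gcongr
      exact (Set.ncard_le_ncard hsub (Set.toFinite _)).trans
        (Set.ncard_image_le (Set.toFinite _))

lemma Bispanning.two_mul_card_sub_one_le [Finite E] (h : Bispanning ends) {f : V → W}
    (hf : f.Surjective) :
    2 * (Nat.card W - 1) ≤ Nat.card {e : E | ¬ ((ends e).map f).IsDiag} := by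
  obtain ⟨S, T, hST, hdisj, ⟨hS, -⟩, ⟨hT, -⟩⟩ := h
  set X := {e : E | ¬ ((ends e).map f).IsDiag}
  have hS' : Nat.card W ≤ (S ∩ X).ncard + 1 := (hS.map_of_surjective hf).card_le_ncard_add_one
  have hT' : Nat.card W ≤ (T ∩ X).ncard + 1 := (hT.map_of_surjective hf).card_le_ncard_add_one
  have hX : (S ∩ X).ncard + (T ∩ X).ncard = X.ncard := by
    rw [← Set.ncard_union_eq (hdisj.mono Set.inter_subset_left Set.inter_subset_left),
      ← Set.union_inter_distrib_right, hST, Set.univ_inter]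
  rw [Nat.card_coe_set_eq]
  omega

lemma exists_ends_eq (ends : E → Sym2 V) (e : E) : ∃ a b, ends e = s(a, b) := by
  induction ends e using Sym2.ind with
  | h a b => exact ⟨a, b, rfl⟩

def inducedEdges (ends : E → Sym2 V) (U : Set V) : Set E := {e | ∀ w ∈ ends e, w ∈ U}

/-- `(2,2)`-sparsity. At `U = ∅` the truncated bound `2 * 0 - 2 = 0` is still the right one. -/
def Sparse (ends : E → Sym2 V) : Prop :=
  ∀ U : Set V, (inducedEdges ends U).ncard ≤ 2 * U.ncard - 2

def Tight (ends : E → Sym2 V) (U : Set V) : Prop :=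
  2 * U.ncard ≤ (inducedEdges ends U).ncard + 2

lemma mem_inducedEdges_of_eq {a b : V} (he : ends e = s(a, b)) :
    e ∈ inducedEdges ends U ↔ a ∈ U ∧ b ∈ U := by
  simp [inducedEdges, he]

lemma inducedEdges_empty : inducedEdges ends (∅ : Set V) = ∅ := by
  ext e
  obtain ⟨a, b, he⟩ := exists_ends_eq ends e
  simp [mem_inducedEdges_of_eq he]

lemma inducedEdges_mono (h : U ⊆ U') : inducedEdges ends U ⊆ inducedEdges ends U' :=
  fun _ he w hw => h (he w hw)

lemma sparse_of_forall_setoid [Finite V] [Finite E] (hcard : Nat.card E = 2 * Nat.card V - 2)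
    (h : ∀ s : Setoid V, 2 * (Nat.card (Quotient s) - 1) ≤
      Nat.card {e : E | ¬ (Sym2.map (Quotient.mk s) (ends e)).IsDiag}) :
    Sparse ends := by
  classical
  intro U
  rcases U.eq_empty_or_nonempty with rfl | ⟨u₀, hu₀⟩
  · simp [inducedEdges_empty]
  let f : V → Option ↥Uᶜ := fun w => if hw : w ∈ U then none else some ⟨w, hw⟩
  have hf : f.Surjective := by
    rintro (_ | ⟨w, hw⟩)
    · exact ⟨u₀, dif_pos hu₀⟩
    · exact ⟨w, dif_neg hw⟩
  have hquot : Nat.card (Quotient (Setoid.ker f)) = Uᶜ.ncard + 1 := by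
    rw [Nat.card_congr (Setoid.quotientKerEquivOfSurjective f hf), Finite.card_option,
      Nat.card_coe_set_eq]
  have hcross : {e : E | ¬ (Sym2.map (Quotient.mk (Setoid.ker f)) (ends e)).IsDiag} ⊆
      (inducedEdges ends U)ᶜ := by
    intro e he hin
    obtain ⟨a, b, hab⟩ := exists_ends_eq ends e
    obtain ⟨ha, hb⟩ := (mem_inducedEdges_of_eq hab).1 hin
    refine he ?_
    rw [hab, Sym2.map_mk, Sym2.mk_isDiag_iff]
    exact Quotient.sound (Setoid.ker_def.2 (by simp [f, ha, hb]))
  have h₁ := h (Setoid.ker f)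
  rw [hquot, Nat.card_coe_set_eq] at h₁
  have h₂ := Set.ncard_le_ncard hcross
  have h₃ := Set.ncard_add_ncard_compl (inducedEdges ends U)
  have h₄ := Set.ncard_add_ncard_compl U
  have h₅ : 1 ≤ U.ncard := (Set.ncard_pos).2 ⟨u₀, hu₀⟩
  omega

lemma Sparse.not_isDiag [Finite E] (hsp : Sparse ends) (e : E) : ¬ (ends e).IsDiag := by
  intro hd
  obtain ⟨a, b, hab⟩ := exists_ends_eq ends e
  rw [hab, Sym2.mk_isDiag_iff] at hd
  subst hd
  have hempty : (inducedEdges ends {a}).ncard = 0 := by simpa using hsp {a}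
  rw [Set.ncard_eq_zero] at hempty
  exact hempty.subset ((mem_inducedEdges_of_eq hab).2 ⟨rfl, rfl⟩)

lemma Sparse.exists_eq_mk [Finite E] (hsp : Sparse ends) (he : v ∈ ends e) :
    ∃ a, a ≠ v ∧ ends e = s(v, a) :=
  ⟨_, Sym2.other_ne (hsp.not_isDiag e) he, (Sym2.other_spec he).symm⟩

lemma exists_deg_le_three [Finite V] [Finite E] [Nonempty V]
    (hcard : Nat.card E = 2 * Nat.card V - 2) : ∃ v, deg ends v ≤ 3 := by
  classical
  have := Fintype.ofFinite V
  have := Fintype.ofFinite E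
  by_contra! hdeg
  have hdouble := Finset.card_nsmul_le_card_nsmul (s := Finset.univ) (t := Finset.univ)
    (r := fun v e => v ∈ ends e) (m := 4) (n := 2)
    (fun v _ => by simpa [deg, Finset.bipartiteAbove, Nat.card_eq_fintype_card,
      Fintype.card_subtype, Nat.succ_le_iff] using hdeg v)
    (fun e _ => by
      simp only [Finset.bipartiteBelow, ← Sym2.mem_toFinset, Finset.filter_mem_eq_inter,
        Finset.univ_inter]
      have hcard := Sym2.card_toFinset (ends e)
      split_ifs at hcard <;> simp [hcard])
  simp only [Finset.card_univ, smul_eq_mul, ← Nat.card_eq_fintype_card] at hdouble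
  have : 0 < Nat.card V := Nat.card_pos
  omega

lemma inducedEdges_compl_singleton : inducedEdges ends {v}ᶜ = {e | v ∈ ends e}ᶜ := by
  ext e
  simp only [inducedEdges, Set.mem_compl_iff, Set.mem_singleton_iff, Set.mem_ofPred_eq]
  exact ⟨fun h hv => h v hv rfl, fun h w hw hwv => h (hwv ▸ hw)⟩

lemma Sparse.two_le_deg [Finite V] [Finite E] (hsp : Sparse ends)
    (hcard : Nat.card E = 2 * Nat.card V - 2) (hV : 2 ≤ Nat.card V) (v : V) :
    2 ≤ deg ends v := by
  have h₁ := hsp {v}ᶜ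
  rw [inducedEdges_compl_singleton] at h₁
  have h₂ := Set.ncard_add_ncard_compl {e | v ∈ ends e}
  have h₃ := Set.ncard_add_ncard_compl {v}
  rw [Set.ncard_singleton] at h₃
  rw [deg, Nat.card_coe_set_eq]
  omega

lemma ncard_inducedEdges_add_le [Finite E] (U U' : Set V) :
    (inducedEdges ends U).ncard + (inducedEdges ends U').ncard ≤
      (inducedEdges ends (U ∪ U')).ncard + (inducedEdges ends (U ∩ U')).ncard := by
  have hinter : inducedEdges ends (U ∩ U') = inducedEdges ends U ∩ inducedEdges ends U' := by
    ext e
    simp only [inducedEdges, Set.mem_inter_iff, Set.mem_ofPred_eq]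
    exact ⟨fun h => ⟨fun w hw => (h w hw).1, fun w hw => (h w hw).2⟩,
      fun h w hw => ⟨h.1 w hw, h.2 w hw⟩⟩
  rw [hinter, ← Set.ncard_union_add_ncard_inter]
  gcongr
  · exact Set.toFinite _
  · exact Set.union_subset (inducedEdges_mono Set.subset_union_left)
      (inducedEdges_mono Set.subset_union_right)

lemma Sparse.tight_union [Finite V] [Finite E] (hsp : Sparse ends) (hU : Tight ends U)
    (hU' : Tight ends U') (h : (U ∩ U').Nonempty) : Tight ends (U ∪ U') := by
  have h₁ := ncard_inducedEdges_add_le (ends := ends) U U'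
  have h₂ := Set.ncard_union_add_ncard_inter U U'
  have h₃ := hsp (U ∩ U')
  have h₄ : 1 ≤ (U ∩ U').ncard := (Set.ncard_pos).2 h
  unfold Tight at *
  omega

/-- Adding `v` to `U` would add three edges for one vertex. -/
lemma Sparse.not_tight_of_edges [Finite V] [Finite E] (hsp : Sparse ends)
    {f₁ f₂ f₃ : E} {a₁ a₂ a₃ : V} (h₁₂ : f₁ ≠ f₂) (h₁₃ : f₁ ≠ f₃) (h₂₃ : f₂ ≠ f₃)
    (hf₁ : ends f₁ = s(v, a₁)) (hf₂ : ends f₂ = s(v, a₂)) (hf₃ : ends f₃ = s(v, a₃))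
    (ha₁ : a₁ ∈ U) (ha₂ : a₂ ∈ U) (ha₃ : a₃ ∈ U) (hv : v ∉ U) : ¬ Tight ends U := by
  have hnot : ∀ {f a}, ends f = s(v, a) → f ∉ inducedEdges ends U :=
    fun hf hin => hv ((mem_inducedEdges_of_eq hf).1 hin).1
  have hsub : insert f₁ (insert f₂ (insert f₃ (inducedEdges ends U))) ⊆
      inducedEdges ends (insert v U) := by
    have hmem : ∀ {f a}, ends f = s(v, a) → a ∈ U → f ∈ inducedEdges ends (insert v U) :=
      fun hf ha => (mem_inducedEdges_of_eq hf).2 ⟨U.mem_insert v, U.mem_insert_of_mem v ha⟩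
    rintro e (rfl | rfl | rfl | he)
    exacts [hmem hf₁ ha₁, hmem hf₂ ha₂, hmem hf₃ ha₃, inducedEdges_mono (U.subset_insert v) he]
  have hcard := Set.ncard_le_ncard hsub
  rw [Set.ncard_insert_of_notMem
      (by rintro (rfl | rfl | h); exacts [h₁₂ rfl, h₁₃ rfl, hnot hf₁ h]),
    Set.ncard_insert_of_notMem (by rintro (rfl | h); exacts [h₂₃ rfl, hnot hf₂ h]),
    Set.ncard_insert_of_notMem (hnot hf₃)] at hcard
  have := hsp (insert v U)
  rw [Set.ncard_insert_of_notMem hv] at this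
  unfold Tight
  omega

/-- The edge `xy` cannot be added to `G - v` without violating sparsity. -/
def Blocked (ends : E → Sym2 V) (v x y : V) : Prop :=
  ∃ U : Set V, x ∈ U ∧ y ∈ U ∧ v ∉ U ∧ Tight ends U

lemma Sparse.not_blocked_or [Finite V] [Finite E] (hsp : Sparse ends)
    {f₁ f₂ f₃ : E} {a₁ a₂ a₃ : V} (h₁₂ : f₁ ≠ f₂) (h₁₃ : f₁ ≠ f₃) (h₂₃ : f₂ ≠ f₃)
    (hf₁ : ends f₁ = s(v, a₁)) (hf₂ : ends f₂ = s(v, a₂)) (hf₃ : ends f₃ = s(v, a₃)) :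
    ¬ Blocked ends v a₁ a₂ ∨ ¬ Blocked ends v a₁ a₃ := by
  by_contra! ⟨⟨U, ha₁, ha₂, hv, hU⟩, ⟨U', ha₁', ha₃, hv', hU'⟩⟩
  exact hsp.not_tight_of_edges h₁₂ h₁₃ h₂₃ hf₁ hf₂ hf₃ (Or.inl ha₁) (Or.inl ha₂) (Or.inr ha₃)
    (by rintro (h | h); exacts [hv h, hv' h]) (hsp.tight_union hU hU' ⟨a₁, ha₁, ha₁'⟩)

lemma card_subtype_ne_add_one [Finite V] (v : V) : Nat.card {w // w ≠ v} + 1 = Nat.card V := by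
  have := Set.ncard_add_ncard_compl {v}
  rw [Set.ncard_singleton] at this
  change ({v}ᶜ : Set V).ncard + 1 = _
  omega

lemma card_subtype_notMem_add_deg [Finite E] (ends : E → Sym2 V) (v : V) :
    Nat.card {e // v ∉ ends e} + deg ends v = Nat.card E := by
  have := Set.ncard_add_ncard_compl {e | v ∈ ends e}
  change ({e | v ∈ ends e}ᶜ : Set E).ncard + {e | v ∈ ends e}.ncard = _
  omega

def deleteVertex (ends : E → Sym2 V) (v : V) : {e // v ∉ ends e} → Sym2 {w // w ≠ v} :=
  fun e => (ends e).attachWith fun _ hw hwv => e.2 (hwv ▸ hw)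

lemma map_val_deleteVertex (e : {e // v ∉ ends e}) :
    (deleteVertex ends v e).map Subtype.val = ends e :=
  Sym2.attachWith_map_subtypeVal _

lemma mem_deleteVertex {e : {e // v ∉ ends e}} {w : {w // w ≠ v}} :
    w ∈ deleteVertex ends v e ↔ w.1 ∈ ends e := by
  rw [← map_val_deleteVertex (ends := ends), Sym2.mem_map]
  exact ⟨fun hw => ⟨w, hw, rfl⟩, fun ⟨w', hw', h⟩ => Subtype.ext h ▸ hw'⟩

lemma Adj.of_deleteVertex {A : Set {e // v ∉ ends e}} {p q : {w // w ≠ v}}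
    (h : Adj (deleteVertex ends v) A p q) : Adj ends (Subtype.val '' A) p q := by
  obtain ⟨e, he, hpq⟩ := h
  exact ⟨e, ⟨e, he, rfl⟩, by rw [← map_val_deleteVertex (ends := ends), hpq, Sym2.map_mk]⟩

lemma Reach.of_deleteVertex {A : Set {e // v ∉ ends e}} {p q : {w // w ≠ v}}
    (h : Reach (deleteVertex ends v) A p q) : Reach ends (Subtype.val '' A) p q :=
  Relation.ReflTransGen.lift Subtype.val (fun _ _ => Adj.of_deleteVertex) _ _ h

lemma image_val_inducedEdges_deleteVertex (U : Set {w // w ≠ v}) :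
    Subtype.val '' inducedEdges (deleteVertex ends v) U =
      inducedEdges ends (Subtype.val '' U) := by
  ext e
  constructor
  · rintro ⟨e, he, rfl⟩ w hw
    have hwv : w ≠ v := fun h => e.2 (h ▸ hw)
    exact ⟨⟨w, hwv⟩, he _ (mem_deleteVertex.2 hw), rfl⟩
  · intro he
    have hv : v ∉ ends e := fun hv => by
      obtain ⟨w, -, hw⟩ := he v hv
      exact w.2 hw
    refine ⟨⟨e, hv⟩, fun w hw => ?_, rfl⟩
    obtain ⟨w', hw', hww'⟩ := he w.1 (mem_deleteVertex.1 hw)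
    exact Subtype.ext hww' ▸ hw'

lemma ncard_inducedEdges_deleteVertex (U : Set {w // w ≠ v}) :
    (inducedEdges (deleteVertex ends v) U).ncard =
      (inducedEdges ends (Subtype.val '' U)).ncard := by
  rw [← image_val_inducedEdges_deleteVertex, Set.ncard_image_of_injective _ Subtype.val_injective]

lemma sparse_deleteVertex (hsp : Sparse ends) (v : V) : Sparse (deleteVertex ends v) := by
  intro U
  rw [ncard_inducedEdges_deleteVertex, ← Set.ncard_image_of_injective U Subtype.val_injective]
  exact hsp _

lemma tight_deleteVertex_iff {U : Set {w // w ≠ v}} :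
    Tight (deleteVertex ends v) U ↔ Tight ends (Subtype.val '' U) := by
  rw [Tight, Tight, ncard_inducedEdges_deleteVertex,
    Set.ncard_image_of_injective U Subtype.val_injective]

def addEdge (ends : E → Sym2 V) (z : Sym2 V) : Option E → Sym2 V := fun o => o.elim z ends

lemma Adj.of_addEdge {z : Sym2 V} {A : Set (Option E)} (h : Adj (addEdge ends z) A u w) :
    Adj ends (some ⁻¹' A) u w ∨ none ∈ A ∧ z = s(u, w) := by
  obtain ⟨_ | e, he, huw⟩ := h
  exacts [Or.inr ⟨he, huw⟩, Or.inl ⟨e, he, huw⟩]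

lemma ncard_preimage_some_of_none_notMem [Finite E] {A : Set (Option E)} (h : none ∉ A) :
    (some ⁻¹' A).ncard = A.ncard := by
  refine Set.ncard_preimage_of_injective_subset_range (Option.some_injective E) ?_
  rintro (_ | e) he
  exacts [(h he).elim, ⟨e, rfl⟩]

lemma ncard_preimage_some_add_one [Finite E] {A : Set (Option E)} (h : none ∈ A) :
    (some ⁻¹' A).ncard + 1 = A.ncard := by
  rw [← Set.ncard_sdiff_singleton_add_one h,
    ← ncard_preimage_some_of_none_notMem (A := A \ {none}) (by simp)]
  congr 2
  ext e
  simp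

lemma sparse_addEdge [Finite E] (hsp : Sparse ends) {x y : V}
    (hxy : ∀ U : Set V, x ∈ U → y ∈ U → ¬ Tight ends U) : Sparse (addEdge ends s(x, y)) := by
  intro U
  have hpre : some ⁻¹' inducedEdges (addEdge ends s(x, y)) U = inducedEdges ends U := rfl
  by_cases hnone : none ∈ inducedEdges (addEdge ends s(x, y)) U
  · obtain ⟨hx, hy⟩ := (mem_inducedEdges_of_eq (ends := addEdge ends s(x, y)) rfl).1 hnone
    have := hxy U hx hy
    rw [← ncard_preimage_some_add_one hnone, hpre]
    unfold Tight at this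
    omega
  · rw [← ncard_preimage_some_of_none_notMem hnone, hpre]
    exact hsp U

lemma Bispanning.exists_mem_left (h : Bispanning ends) (e : E) :
    ∃ S T : Set E, S ∪ T = Set.univ ∧ Disjoint S T ∧
      IsSpanningTree ends S ∧ IsSpanningTree ends T ∧ e ∈ S := by
  obtain ⟨S, T, hST, hdisj, hS, hT⟩ := h
  rcases (hST ▸ Set.mem_univ e : e ∈ S ∪ T) with he | he
  · exact ⟨S, T, hST, hdisj, hS, hT, he⟩
  · exact ⟨T, S, Set.union_comm S T ▸ hST, hdisj.symm, hT, hS, he⟩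

lemma bispanning_of_card_lt_two [Finite V] [Finite E] (hV : Nat.card V < 2)
    (hcard : Nat.card E = 2 * Nat.card V - 2) : Bispanning ends := by
  have : IsEmpty E := Finite.card_eq_zero_iff.1 (by omega)
  have : Subsingleton V := Finite.card_le_one_iff_subsingleton.1 (by omega)
  have hempty : IsSpanningTree ends ∅ :=
    ⟨fun u w => Subsingleton.elim u w ▸ .refl, by rw [Nat.card_coe_set_eq, Set.ncard_empty]; omega⟩
  exact ⟨∅, ∅, Set.eq_univ_of_forall isEmptyElim, Set.disjoint_empty _, hempty, hempty⟩

lemma isSpanningTree_of_pendant [Finite V] {S : Set E} {f : E} {a : V} (hf : f ∈ S)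
    (hfa : ends f = s(v, a)) (ha : a ≠ v) (hreach : ∀ p q : {w // w ≠ v}, Reach ends S p q)
    (hcard : S.ncard + 1 = Nat.card V) : IsSpanningTree ends S := by
  have hv : ∀ w, ∃ w' : {w // w ≠ v}, Reach ends S w w' := by
    intro w
    by_cases hw : w = v
    · subst hw
      exact ⟨⟨a, ha⟩, Adj.reach ⟨f, hf, hfa⟩⟩
    · exact ⟨⟨w, hw⟩, .refl⟩
  refine ⟨fun u w => ?_, by rw [Nat.card_coe_set_eq]; omega⟩
  obtain ⟨u', hu⟩ := hv u
  obtain ⟨w', hw⟩ := hv w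
  exact (hu.trans (hreach u' w')).trans hw.symm

lemma disjoint_image_val {A : Set {e // v ∉ ends e}} {P : Set E} (hP : P ⊆ {e | v ∈ ends e}) :
    Disjoint (Subtype.val '' A) P :=
  Set.disjoint_left.2 fun _ ⟨e, _, he⟩ hP' => e.2 (he ▸ hP hP')

lemma ncard_image_val_union [Finite E] {A : Set {e // v ∉ ends e}} {P : Set E}
    (hP : P ⊆ {e | v ∈ ends e}) : (Subtype.val '' A ∪ P).ncard = A.ncard + P.ncard := by
  rw [Set.ncard_union_eq (disjoint_image_val hP),
    Set.ncard_image_of_injective _ Subtype.val_injective]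

lemma bispanning_of_partition {A B : Set {e // v ∉ ends e}} {P Q : Set E}
    (hAB : A ∪ B = Set.univ) (hAB' : Disjoint A B) (hPQ : P ∪ Q = {e | v ∈ ends e})
    (hPQ' : Disjoint P Q) (hA : IsSpanningTree ends (Subtype.val '' A ∪ P))
    (hB : IsSpanningTree ends (Subtype.val '' B ∪ Q)) : Bispanning ends := by
  refine ⟨_, _, Set.eq_univ_of_forall fun e => ?_, ?_, hA, hB⟩
  · by_cases hv : v ∈ ends e
    · rcases (hPQ ▸ hv : e ∈ P ∪ Q) with h | h
      exacts [Or.inl (Or.inr h), Or.inr (Or.inr h)]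
    · rcases (hAB ▸ Set.mem_univ _ : ⟨e, hv⟩ ∈ A ∪ B) with h | h
      exacts [Or.inl (Or.inl ⟨_, h, rfl⟩), Or.inr (Or.inl ⟨_, h, rfl⟩)]
  · have hP : P ⊆ {e | v ∈ ends e} := hPQ ▸ Set.subset_union_left
    have hQ : Q ⊆ {e | v ∈ ends e} := hPQ ▸ Set.subset_union_right
    simp only [Set.disjoint_union_left, Set.disjoint_union_right]
    exact ⟨⟨(Set.disjoint_image_iff Subtype.val_injective).2 hAB',
      (disjoint_image_val hP).symm⟩, disjoint_image_val hQ, hPQ'⟩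

lemma bispanning_of_deg_eq_two [Finite V] [Finite E] (hsp : Sparse ends)
    (hdeg : deg ends v = 2) (h : Bispanning (deleteVertex ends v)) : Bispanning ends := by
  obtain ⟨S', T', hST, hdisj, ⟨hS, hScard⟩, ⟨hT, hTcard⟩⟩ := h
  rw [deg, Nat.card_coe_set_eq, Set.ncard_eq_two] at hdeg
  obtain ⟨f₁, f₂, h₁₂, hv⟩ := hdeg
  have hv₁ : v ∈ ends f₁ := hv.symm.subset (Or.inl rfl)
  have hv₂ : v ∈ ends f₂ := hv.symm.subset (Or.inr rfl)
  obtain ⟨a, ha, hf₁⟩ := hsp.exists_eq_mk hv₁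
  obtain ⟨b, hb, hf₂⟩ := hsp.exists_eq_mk hv₂
  have hP : ({f₁} : Set E) ⊆ {e | v ∈ ends e} := Set.singleton_subset_iff.2 hv₁
  have hQ : ({f₂} : Set E) ⊆ {e | v ∈ ends e} := Set.singleton_subset_iff.2 hv₂
  have hV := card_subtype_ne_add_one v
  have : Nonempty {w // w ≠ v} := ⟨⟨a, ha⟩⟩
  have : 0 < Nat.card {w // w ≠ v} := Nat.card_pos
  rw [Nat.card_coe_set_eq] at hScard hTcard
  refine bispanning_of_partition hST hdisj (by rw [hv, Set.singleton_union])
    (Set.disjoint_singleton.2 h₁₂) ?_ ?_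
  · refine isSpanningTree_of_pendant (Or.inr rfl) hf₁ ha
      (fun p q => (hS p q).of_deleteVertex.mono Set.subset_union_left) ?_
    rw [ncard_image_val_union hP, Set.ncard_singleton]
    omega
  · refine isSpanningTree_of_pendant (Or.inr rfl) hf₂ hb
      (fun p q => (hT p q).of_deleteVertex.mono Set.subset_union_left) ?_
    rw [ncard_image_val_union hQ, Set.ncard_singleton]
    omega

/-- Splitting off `v`: a tree of `G - v + xy` through the new edge `xy` becomes a tree of `G`
by rerouting `xy` through `v`; the other tree picks up the third edge at `v`. -/
lemma bispanning_of_split [Finite V] [Finite E] {f₁ f₂ f₃ : E} {x y z : V}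
    (hv : {e | v ∈ ends e} = {f₁, f₂, f₃}) (h₁₂ : f₁ ≠ f₂) (h₁₃ : f₁ ≠ f₃) (h₂₃ : f₂ ≠ f₃)
    (hf₁ : ends f₁ = s(v, x)) (hf₂ : ends f₂ = s(v, y)) (hf₃ : ends f₃ = s(v, z))
    (hx : x ≠ v) (hy : y ≠ v) (hz : z ≠ v)
    (h : Bispanning (addEdge (deleteVertex ends v) s(⟨x, hx⟩, ⟨y, hy⟩))) : Bispanning ends := by
  obtain ⟨S', T', hST, hdisj, ⟨hS, hScard⟩, ⟨hT, hTcard⟩, hnone⟩ := h.exists_mem_left none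
  have hnone' : none ∉ T' := Set.disjoint_left.1 hdisj hnone
  have hP : ({f₁, f₂} : Set E) ⊆ {e | v ∈ ends e} := hv ▸ Set.insert_subset_insert (by simp)
  have hQ : ({f₃} : Set E) ⊆ {e | v ∈ ends e} := by simp [hv]
  have hV := card_subtype_ne_add_one v
  have : Nonempty {w // w ≠ v} := ⟨⟨x, hx⟩⟩
  have : 0 < Nat.card {w // w ≠ v} := Nat.card_pos
  have hS' := ncard_preimage_some_add_one hnone
  have hT' := ncard_preimage_some_of_none_notMem hnone'
  rw [Nat.card_coe_set_eq] at hScard hTcard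
  refine bispanning_of_partition (A := some ⁻¹' S') (B := some ⁻¹' T')
    (by rw [← Set.preimage_union, hST, Set.preimage_univ]) (hdisj.preimage _)
    (by rw [hv, Set.insert_union, Set.singleton_union])
    (Set.disjoint_singleton_right.2 (by simp [h₁₃.symm, h₂₃.symm])) ?_ ?_
  · refine isSpanningTree_of_pendant (Or.inr (Or.inl rfl)) hf₁ hx (fun p q => ?_) ?_
    · have hxy : Reach ends (Subtype.val '' (some ⁻¹' S') ∪ {f₁, f₂}) x y :=
        (Adj.reach ⟨f₁, Or.inr (Or.inl rfl), hf₁⟩).symm.trans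
          (Adj.reach ⟨f₂, Or.inr (Or.inr rfl), hf₂⟩)
      refine Relation.ReflTransGen.lift' Subtype.val (fun a b hab => ?_) _ _ (hS p q)
      rcases hab.of_addEdge with hab | ⟨-, hab⟩
      · exact (Adj.reach hab.of_deleteVertex).mono Set.subset_union_left
      · rcases Sym2.eq_iff.1 hab with ⟨rfl, rfl⟩ | ⟨rfl, rfl⟩
        exacts [hxy, hxy.symm]
    · rw [ncard_image_val_union hP, Set.ncard_pair h₁₂]
      omega
  · refine isSpanningTree_of_pendant (Or.inr rfl) hf₃ hz (fun p q => ?_) ?_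
    · refine Relation.ReflTransGen.lift' Subtype.val (fun a b hab => ?_) _ _ (hT p q)
      rcases hab.of_addEdge with hab | ⟨hn, -⟩
      · exact (Adj.reach hab.of_deleteVertex).mono Set.subset_union_left
      · exact absurd hn hnone'
    · rw [ncard_image_val_union hQ, Set.ncard_singleton]
      omega

lemma bispanning_of_deg_eq_three [Finite V] [Finite E] (hsp : Sparse ends)
    (hdeg : deg ends v = 3)
    (ih : ∀ x y : {w // w ≠ v}, Sparse (addEdge (deleteVertex ends v) s(x, y)) →
      Bispanning (addEdge (deleteVertex ends v) s(x, y))) : Bispanning ends := by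
  rw [deg, Nat.card_coe_set_eq, Set.ncard_eq_three] at hdeg
  obtain ⟨f₁, f₂, f₃, h₁₂, h₁₃, h₂₃, hv⟩ := hdeg
  obtain ⟨a₁, ha₁, hf₁⟩ := hsp.exists_eq_mk (hv.symm.subset (Or.inl rfl))
  obtain ⟨a₂, ha₂, hf₂⟩ := hsp.exists_eq_mk (hv.symm.subset (Or.inr (Or.inl rfl)))
  obtain ⟨a₃, ha₃, hf₃⟩ := hsp.exists_eq_mk (hv.symm.subset (Or.inr (Or.inr rfl)))
  have hsplit : ∀ {x y : V} (hx : x ≠ v) (hy : y ≠ v), ¬ Blocked ends v x y →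
      Bispanning (addEdge (deleteVertex ends v) s(⟨x, hx⟩, ⟨y, hy⟩)) := fun _ _ hxy =>
    ih _ _ <| sparse_addEdge (sparse_deleteVertex hsp v) fun U hxU hyU hU =>
      hxy ⟨Subtype.val '' U, ⟨_, hxU, rfl⟩, ⟨_, hyU, rfl⟩, fun ⟨w, _, hw⟩ => w.2 hw,
        tight_deleteVertex_iff.1 hU⟩
  rcases hsp.not_blocked_or h₁₂ h₁₃ h₂₃ hf₁ hf₂ hf₃ with h | h
  · exact bispanning_of_split hv h₁₂ h₁₃ h₂₃ hf₁ hf₂ hf₃ ha₁ ha₂ ha₃ (hsplit ha₁ ha₂ h)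
  · exact bispanning_of_split (hv.trans (congrArg (insert f₁) (Set.pair_comm f₂ f₃)))
      h₁₃ h₁₂ h₂₃.symm hf₁ hf₃ hf₂ ha₁ ha₃ ha₂ (hsplit ha₁ ha₃ h)

theorem Sparse.bispanning [Finite V] [Finite E] (hsp : Sparse ends)
    (hcard : Nat.card E = 2 * Nat.card V - 2) : Bispanning ends := by
  induction hn : Nat.card V using Nat.strong_induction_on generalizing V E with
  | _ n ih =>
  subst hn
  rcases Nat.lt_or_ge (Nat.card V) 2 with hV | hV
  · exact bispanning_of_card_lt_two hV hcard
  have : Nonempty V := Nat.card_pos_iff.1 (by omega) |>.1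
  obtain ⟨v, hv3⟩ := exists_deg_le_three (ends := ends) hcard
  have hv2 := hsp.two_le_deg hcard hV v
  have hV' := card_subtype_ne_add_one v
  have hE' := card_subtype_notMem_add_deg ends v
  interval_cases hdeg : deg ends v
  · exact bispanning_of_deg_eq_two hsp hdeg
      (ih _ (by omega) (sparse_deleteVertex hsp v) (by omega) rfl)
  · refine bispanning_of_deg_eq_three hsp hdeg fun x y hsp' => ih _ (by omega) hsp' ?_ rfl
    rw [Finite.card_option]
    omega

end MG

theorem nash_williams_bispanning_general {V E : Type*} [Finite V] [Finite E]
    (ends : E → Sym2 V)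
    (hcard : Nat.card E = 2 * Nat.card V - 2) :
    MG.Bispanning ends ↔
      ∀ s : Setoid V,
        2 * (Nat.card (Quotient s) - 1) ≤
          Nat.card {e : E | ¬ (Sym2.map (Quotient.mk s) (ends e)).IsDiag} :=
  ⟨fun h _ => h.two_mul_card_sub_one_le Quotient.mk_surjective,
    fun h => (MG.sparse_of_forall_setoid hcard h).bispanning hcard⟩

/-- Nash-Williams/Tutte arboricity criterion for two trees: a graph with
`|E| = 2|V| - 2` is bispanning if and only if for every partition of `V`, the number
of edges with ends in different parts is at least `2(|P| - 1)`. -/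
theorem nash_williams_bispanning {V E : Type*} [Finite V] [Finite E]
    (ends : E → Sym2 V) (hloop : ∀ e : E, ¬ (ends e).IsDiag)
    (hcard : Nat.card E = 2 * Nat.card V - 2) :
    MG.Bispanning ends ↔
      ∀ s : Setoid V,
        2 * (Nat.card (Quotient s) - 1) ≤
          Nat.card {e : E | ¬ (Sym2.map (Quotient.mk s) (ends e)).IsDiag} :=
  nash_williams_bispanning_general ends hcard
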